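/- arXiv:1503.00112 — 2 statements merged into one kernel-verified Lean document; each statement's English description precedes it below -/
import Mathlib

section
/- Let $A$ be a real symmetric negative definite $r \times r$ matrix with nonnegative off-diagonal entries, and let $v \in \mathbb{R}^r$ be a vector with all entries nonnegative. Then the solution $b = -A^{-1} v$ of the linear system $A b = -v$ has all entries nonnegative. -/
open Matrix

theorem negdef_inverse_solution_nonneg {r : ℕ} (A : Matrix (Fin r) (Fin r) ℝ)
    (hsymm : A.IsSymm)
    (hneg : ∀ x : Fin r → ℝ, x ≠ 0 → x ⬝ᵥ (A *ᵥ x) < 0)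
    (hoff : ∀ i j : Fin r, i ≠ j → 0 ≤ A i j)
    (v : Fin r → ℝ) (hv : ∀ i, 0 ≤ v i)
    (b : Fin r → ℝ) (hb : b = -(A⁻¹ *ᵥ v)) :
    ∀ i, 0 ≤ b i := by
  have hinj : Function.Injective A.mulVec := by
    intro y z h
    by_contra hne
    have hx : y - z ≠ 0 := sub_ne_zero.mpr hne
    have := hneg (y - z) hx
    rw [mulVec_sub, h, sub_self, dotProduct_zero] at this
    exact lt_irrefl 0 this
  have hunit : IsUnit A := mulVec_injective_iff_isUnit.mp hinj
  have hdet : IsUnit A.det := (isUnit_iff_isUnit_det A).mp hunit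
  have hAb : A *ᵥ b = -v := by
    rw [hb, mulVec_neg, mulVec_mulVec, mul_nonsing_inv A hdet, one_mulVec]
  intro i
  by_contra hbi
  push_neg at hbi
  set x : Fin r → ℝ := fun j => min (b j) 0 with hxdef
  have hxle : ∀ j, x j ≤ 0 := fun j => min_le_right _ _
  have hbx : ∀ j, 0 ≤ b j - x j := fun j => sub_nonneg.mpr (min_le_left _ _)
  have hxne : x ≠ 0 := by
    intro h
    have h2 := congrFun h i
    simp only [hxdef, Pi.zero_apply] at h2
    rw [min_eq_left hbi.le] at h2
    exact absurd h2 (ne_of_lt hbi)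
  have hxAx := hneg x hxne
  have h1 : 0 ≤ x ⬝ᵥ (A *ᵥ b) := by
    rw [hAb, dotProduct_neg, neg_nonneg]
    apply Finset.sum_nonpos
    intro j _
    exact mul_nonpos_of_nonpos_of_nonneg (hxle j) (hv j)
  have h2 : x ⬝ᵥ (A *ᵥ (b - x)) ≤ 0 := by
    rw [dotProduct]
    apply Finset.sum_nonpos
    intro i' _
    rw [mulVec, dotProduct, Finset.mul_sum]
    apply Finset.sum_nonpos
    intro j _
    by_cases hxi : x i' = 0
    · rw [hxi, zero_mul]
    · have hxi' : x i' < 0 := lt_of_le_of_ne (hxle i') hxi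
      by_cases hbj : b j - x j = 0
      · rw [Pi.sub_apply, hbj, mul_zero, mul_zero]
      · have hbj' : 0 < b j - x j := lt_of_le_of_ne (hbx j) (Ne.symm hbj)
        have hbineg : b i' < 0 := by
          by_contra h
          push_neg at h
          simp only [hxdef, min_eq_right h] at hxi'
          exact lt_irrefl 0 hxi'
        have hbjpos : 0 < b j := by
          by_contra h
          push_neg at h
          simp only [hxdef, min_eq_left h] at hbj'
          simp at hbj'
        have hij : i' ≠ j := fun h => absurd (h ▸ hbineg) (not_lt.mpr hbjpos.le)
        exact mul_nonpos_of_nonpos_of_nonneg hxi'.le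
          (mul_nonneg (hoff i' j hij) (hbx j))
  have hsplit : x ⬝ᵥ (A *ᵥ b) = x ⬝ᵥ (A *ᵥ x) + x ⬝ᵥ (A *ᵥ (b - x)) := by
    have hbeq : b = x + (b - x) := by ext j; simp
    conv_lhs => rw [hbeq]
    rw [mulVec_add, dotProduct_add]
  linarith
end

section
/- Let $\Delta \subseteq \mathbb{R}^n$ be a convex subset of $\mathbb{Q}^n$ (i.e., a set of rational points closed under rational convex combinations). Suppose $p \in \mathbb{Q}^n$ lies in the interior of the closure $\overline{\Delta}$ (the closure being a convex body of positive volume). Then $p \in \Delta$. -/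
/-- Key inductive lemma: if all points of `Δ` agree with `p` in coordinates `≥ k`,
and `p` has a relative neighborhood (within the slice where coordinates `≥ k` are
fixed to those of `p`) contained in `closure Δ`, then `p ∈ Δ`. -/
private lemma rational_aux {n : ℕ} : ∀ k : ℕ, ∀ Δ : Set (Fin n → ℝ),
    (∀ x ∈ Δ, ∀ i, ∃ q : ℚ, x i = (q : ℝ)) →
    (∀ x ∈ Δ, ∀ y ∈ Δ, ∀ q : ℚ, 0 ≤ q → q ≤ 1 →
      (q : ℝ) • x + ((1 : ℝ) - (q : ℝ)) • y ∈ Δ) →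
    ∀ p : Fin n → ℝ, (∀ i, ∃ q : ℚ, p i = (q : ℝ)) →
    (∀ x ∈ Δ, ∀ i : Fin n, k ≤ (i : ℕ) → x i = p i) →
    (∃ ε > 0, ∀ y : Fin n → ℝ, (∀ i : Fin n, k ≤ (i : ℕ) → y i = p i) →
      dist y p < ε → y ∈ closure Δ) →
    p ∈ Δ := by
  intro k
  induction k with
  | zero =>
    rintro Δ hrat hconv p hp hfix ⟨ε, hε, hball⟩
    have hpcl : p ∈ closure Δ := hball p (fun i _ => rfl) (by simpa using hε)
    obtain ⟨x, hx⟩ := closure_nonempty_iff.mp ⟨p, hpcl⟩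
    have hxp : x = p := funext fun i => hfix x hx i (Nat.zero_le _)
    rwa [hxp] at hx
  | succ k ih =>
    rintro Δ hrat hconv p hp hfix ⟨ε, hε, hball⟩
    by_cases hkn : k < n
    · set ι : Fin n := ⟨k, hkn⟩ with hι
      set Δ' : Set (Fin n → ℝ) := {z ∈ Δ | z ι = p ι} with hΔ'
      have hrat' : ∀ x ∈ Δ', ∀ i, ∃ q : ℚ, x i = (q : ℝ) :=
        fun x hx => hrat x hx.1
      have hconv' : ∀ x ∈ Δ', ∀ y ∈ Δ', ∀ q : ℚ, 0 ≤ q → q ≤ 1 →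
          (q : ℝ) • x + ((1 : ℝ) - (q : ℝ)) • y ∈ Δ' := by
        rintro x ⟨hx, hxι⟩ y ⟨hy, hyι⟩ q hq0 hq1
        refine ⟨hconv x hx y hy q hq0 hq1, ?_⟩
        simp only [Pi.add_apply, Pi.smul_apply, smul_eq_mul, hxι, hyι]
        ring
      have hfix' : ∀ x ∈ Δ', ∀ i : Fin n, k ≤ (i : ℕ) → x i = p i := by
        rintro x ⟨hx, hxι⟩ i hi
        rcases eq_or_lt_of_le hi with h | h
        · have : i = ι := Fin.ext h.symm
          rwa [this]
        · exact hfix x hx i h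
      have hint' : ∃ ε > 0, ∀ y : Fin n → ℝ,
          (∀ i : Fin n, k ≤ (i : ℕ) → y i = p i) → dist y p < ε →
          y ∈ closure Δ' := by
        refine ⟨ε / 2, by linarith, fun y hy hyd => ?_⟩
        rw [Metric.mem_closure_iff]
        intro δ hδ
        set t : ℝ := min (δ / 4) (ε / 4) with ht
        have ht0 : 0 < t := lt_min (by linarith) (by linarith)
        have htδ : t ≤ δ / 4 := min_le_left _ _
        have htε : t ≤ ε / 4 := min_le_right _ _
        have hyι : y ι = p ι := hy ι le_rfl
        set yp : Fin n → ℝ := Function.update y ι (p ι + t) with hyp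
        set ym : Fin n → ℝ := Function.update y ι (p ι - t) with hym
        have hdyp : dist yp y ≤ t := by
          refine (dist_pi_le_iff ht0.le).mpr fun i => ?_
          by_cases h : i = ι
          · subst h
            simp [yp, hyι, Real.dist_eq, abs_of_nonneg ht0.le]
          · simp [yp, Function.update_of_ne h, ht0.le]
        have hdym : dist ym y ≤ t := by
          refine (dist_pi_le_iff ht0.le).mpr fun i => ?_
          by_cases h : i = ι
          · subst h
            simp [ym, hyι, Real.dist_eq, abs_of_nonneg ht0.le]
          · simp [ym, Function.update_of_ne h, ht0.le]
        have hypcl : yp ∈ closure Δ := by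
          refine hball yp (fun i hi => ?_) ?_
          · have hne : i ≠ ι := by
              intro h; rw [h] at hi
              have hk : (ι : ℕ) = k := rfl
              omega
            rw [hyp, Function.update_of_ne hne]
            exact hy i (le_of_lt hi)
          · calc dist yp p ≤ dist yp y + dist y p := dist_triangle _ _ _
              _ < t + ε / 2 := by linarith [hdyp]
              _ ≤ ε / 4 + ε / 2 := by linarith
              _ < ε := by linarith
        have hymcl : ym ∈ closure Δ := by
          refine hball ym (fun i hi => ?_) ?_
          · have hne : i ≠ ι := by
              intro h; rw [h] at hi
              have hk : (ι : ℕ) = k := rfl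
              omega
            rw [hym, Function.update_of_ne hne]
            exact hy i (le_of_lt hi)
          · calc dist ym p ≤ dist ym y + dist y p := dist_triangle _ _ _
              _ < t + ε / 2 := by linarith [hdym]
              _ ≤ ε / 4 + ε / 2 := by linarith
              _ < ε := by linarith
        obtain ⟨xp, hxpΔ, hxpd⟩ := Metric.mem_closure_iff.mp hypcl (t / 2) (by linarith)
        obtain ⟨xm, hxmΔ, hxmd⟩ := Metric.mem_closure_iff.mp hymcl (t / 2) (by linarith)
        -- coordinate bounds at ι
        have hxpι : |xp ι - (p ι + t)| < t / 2 := by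
          have := dist_le_pi_dist yp xp ι
          rw [hyp] at this
          simp only [Function.update_self] at this
          rw [Real.dist_eq] at this
          rw [abs_sub_comm]
          exact lt_of_le_of_lt this hxpd
        have hxmι : |xm ι - (p ι - t)| < t / 2 := by
          have := dist_le_pi_dist ym xm ι
          rw [hym] at this
          simp only [Function.update_self] at this
          rw [Real.dist_eq] at this
          rw [abs_sub_comm]
          exact lt_of_le_of_lt this hxmd
        have hxpgt : p ι + t / 2 < xp ι := by
          have := abs_lt.mp hxpι; linarith [this.1]
        have hxmlt : xm ι < p ι - t / 2 := by
          have := abs_lt.mp hxmι; linarith [(abs_lt.mp hxmι).2]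
        -- rational coordinates
        obtain ⟨r, hr⟩ := hp ι
        obtain ⟨a, ha⟩ := hrat xp hxpΔ ι
        obtain ⟨b, hb⟩ := hrat xm hxmΔ ι
        have hbr : (b : ℝ) < (r : ℝ) := by rw [← hb, ← hr]; linarith
        have hra : (r : ℝ) < (a : ℝ) := by rw [← ha, ← hr]; linarith
        have hbrq : b < r := by exact_mod_cast hbr
        have hraq : r < a := by exact_mod_cast hra
        have hbaq : b < a := lt_trans hbrq hraq
        set q : ℚ := (a - r) / (a - b) with hq
        have hq0 : 0 ≤ q := div_nonneg (by linarith) (by linarith)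
        have hq1 : q ≤ 1 := by
          rw [hq, div_le_one (by linarith : (0:ℚ) < a - b)]
          linarith
        set z : Fin n → ℝ := (q : ℝ) • xm + ((1 : ℝ) - (q : ℝ)) • xp with hz
        have hzΔ : z ∈ Δ := hconv xm hxmΔ xp hxpΔ q hq0 hq1
        have hzi : ∀ i, z i = (q : ℝ) * xm i + (1 - (q : ℝ)) * xp i := by
          intro i; simp [hz]
        have hzι : z ι = p ι := by
          rw [hzi ι, hb, ha, hr]
          have hab : (a : ℝ) - (b : ℝ) ≠ 0 :=
            sub_ne_zero_of_ne (ne_of_gt (by exact_mod_cast hbaq))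
          have key : (q : ℝ) = ((a : ℝ) - (r : ℝ)) / ((a : ℝ) - (b : ℝ)) := by
            rw [hq]; push_cast; ring
          rw [key]; field_simp; ring
        have hq0' : (0 : ℝ) ≤ (q : ℝ) := by exact_mod_cast hq0
        have hq1' : (q : ℝ) ≤ 1 := by exact_mod_cast hq1
        -- distance bounds
        have hyxp : ∀ i, |y i - xp i| ≤ 3 * t / 2 := by
          intro i
          have h1 : dist (y i) (xp i) ≤ dist y xp := dist_le_pi_dist y xp i
          have h2 : dist y xp ≤ dist y yp + dist yp xp := dist_triangle _ _ _
          rw [Real.dist_eq] at h1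
          have h3 : dist y yp = dist yp y := dist_comm _ _
          linarith [hdyp, hxpd]
        have hyxm : ∀ i, |y i - xm i| ≤ 3 * t / 2 := by
          intro i
          have h1 : dist (y i) (xm i) ≤ dist y xm := dist_le_pi_dist y xm i
          have h2 : dist y xm ≤ dist y ym + dist ym xm := dist_triangle _ _ _
          rw [Real.dist_eq] at h1
          have h3 : dist y ym = dist ym y := dist_comm _ _
          linarith [hdym, hxmd]
        have hdyz : dist y z ≤ 3 * t / 2 := by
          refine (dist_pi_le_iff (by linarith)).mpr fun i => ?_
          rw [Real.dist_eq, hzi i]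
          have heq : y i - ((q : ℝ) * xm i + (1 - (q : ℝ)) * xp i)
              = (q : ℝ) * (y i - xm i) + (1 - (q : ℝ)) * (y i - xp i) := by ring
          rw [heq]
          calc |(q : ℝ) * (y i - xm i) + (1 - (q : ℝ)) * (y i - xp i)|
              ≤ |(q : ℝ) * (y i - xm i)| + |(1 - (q : ℝ)) * (y i - xp i)| :=
                abs_add_le _ _
            _ = (q : ℝ) * |y i - xm i| + (1 - (q : ℝ)) * |y i - xp i| := by
                rw [abs_mul, abs_mul, abs_of_nonneg hq0',
                  abs_of_nonneg (by linarith : (0:ℝ) ≤ 1 - (q : ℝ))]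
            _ ≤ (q : ℝ) * (3 * t / 2) + (1 - (q : ℝ)) * (3 * t / 2) := by
                have := hyxm i
                have := hyxp i
                nlinarith [hyxm i, hyxp i]
            _ = 3 * t / 2 := by ring
        exact ⟨z, ⟨hzΔ, hzι⟩, lt_of_le_of_lt hdyz (by linarith)⟩
      exact (ih Δ' hrat' hconv' p hp hfix' hint').1
    · -- k ≥ n : all index conditions are equivalent, apply IH directly
      refine ih Δ hrat hconv p hp (fun x hx i hi => ?_) ?_
      · exact absurd (lt_of_lt_of_le i.isLt (le_of_not_gt hkn)) (not_lt.mpr hi)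
      · exact ⟨ε, hε, fun y hy hd =>
          hball y (fun i hi => hy i (le_trans (Nat.le_succ k) hi)) hd⟩

theorem rational_interior_point_mem {n : ℕ} (Δ : Set (Fin n → ℝ))
    (hrat : ∀ x ∈ Δ, ∀ i, ∃ q : ℚ, x i = (q : ℝ))
    (hconv : ∀ x ∈ Δ, ∀ y ∈ Δ, ∀ q : ℚ, 0 ≤ q → q ≤ 1 →
      (q : ℝ) • x + ((1 : ℝ) - (q : ℝ)) • y ∈ Δ)
    (p : Fin n → ℝ) (hp : ∀ i, ∃ q : ℚ, p i = (q : ℝ))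
    (hpint : p ∈ interior (closure Δ)) :
    p ∈ Δ := by
  obtain ⟨ε, hε, hsub⟩ := Metric.isOpen_iff.mp isOpen_interior p hpint
  refine rational_aux n Δ hrat hconv p hp
    (fun x _ i hi => absurd i.isLt (not_lt.mpr hi)) ⟨ε, hε, fun y _ hd => ?_⟩
  exact interior_subset (hsub (Metric.mem_ball.mpr hd))
end
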